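/- (Theorem 1, single-user case: optimal power control and time allocation.) Let W > 0, k > 0, D > 0, B > 0, C > 0 and Pmax > 0. Let P* > 0 be the unique positive solution of (P − C)·D/(W·logb 2 (1 + k·P)) = B, set P = min(Pmax, P*) and τ* = D/(W·logb 2 (1 + k·P)). Then τ* is the least element of the set {τ > 0 : ∃ α ≥ 0, W·τ·logb 2 (1 + k·α/τ) ≥ D and α ≤ τ·Pmax and α ≤ B + C·τ}; i.e., τ* is feasible (with energy consumption α* = P·τ*) and every feasible transmission time τ satisfies τ ≥ τ*. -/

import Mathlib

/-!
Let `T(P) = D / (W·logb 2 (1 + k·P))` be the time needed to deliver `D` bits at power `P`. A time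
`τ` is feasible with energy `α` iff the power `Q = α/τ` satisfies `Q ≤ Pmax`, `T(Q) ≤ τ` and
`(Q − C)·τ ≤ B`. By concavity of `log`, `P / log (1 + k·P)` is nondecreasing, so the battery drain
`(P − C)·T(P)` is strictly increasing in `P`; it equals `B` at `P*`. Since `T` is decreasing, a
feasible time below `T(min Pmax P*)` would need a power `Q > P*`, whose drain exceeds `B`.
-/

open Real Set

theorem Real.mul_log_one_add_le_mul_log_one_add {x y : ℝ} (hx : 0 ≤ x) (hxy : x ≤ y) :
    x * log (1 + y) ≤ y * log (1 + x) := by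
  rcases hx.eq_or_lt with rfl | hx
  · simp
  have hy : 0 < y := hx.trans_le hxy
  have hcomb : x / y * (1 + y) + (1 - x / y) * 1 = 1 + x := by field_simp; ring
  have h := strictConcaveOn_log_Ioi.concaveOn.2 (x := 1 + y) (y := 1) (by simp; linarith)
    (by simp) (div_nonneg hx.le hy.le) (sub_nonneg.2 (div_le_one_of_le₀ hxy hy.le)) (by ring)
  simp only [smul_eq_mul, hcomb, log_one, mul_zero, add_zero] at h
  rwa [div_mul_eq_mul_div, div_le_iff₀ hy, mul_comm (log _)] at h

namespace SingleUser

variable {W k D : ℝ}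

noncomputable def transmissionTime (W k D P : ℝ) : ℝ :=
  D / (W * logb 2 (1 + k * P))

noncomputable def batteryDrain (W k D C P : ℝ) : ℝ :=
  (P - C) * transmissionTime W k D P

lemma logb_one_add_mul_pos (hk : 0 < k) {P : ℝ} (hP : 0 < P) : 0 < logb 2 (1 + k * P) :=
  logb_pos one_lt_two (by nlinarith)

lemma logb_one_add_mul_lt (hk : 0 < k) {p q : ℝ} (hp : 0 < p) (hpq : p < q) :
    logb 2 (1 + k * p) < logb 2 (1 + k * q) :=
  logb_lt_logb one_lt_two (by nlinarith) (by nlinarith)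

lemma transmissionTime_pos (hW : 0 < W) (hk : 0 < k) (hD : 0 < D) {P : ℝ} (hP : 0 < P) :
    0 < transmissionTime W k D P :=
  div_pos hD (mul_pos hW (logb_one_add_mul_pos hk hP))

lemma transmissionTime_le_iff (hW : 0 < W) (hk : 0 < k) {P τ : ℝ} (hP : 0 < P) :
    transmissionTime W k D P ≤ τ ↔ D ≤ W * τ * logb 2 (1 + k * P) := by
  rw [transmissionTime, div_le_iff₀ (mul_pos hW (logb_one_add_mul_pos hk hP)), mul_left_comm,
    ← mul_assoc]

lemma strictAntiOn_transmissionTime (hW : 0 < W) (hk : 0 < k) (hD : 0 < D) :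
    StrictAntiOn (transmissionTime W k D) (Ioi 0) := fun _ hp _ _ hpq =>
  div_lt_div_of_pos_left hD (mul_pos hW (logb_one_add_mul_pos hk hp))
    (mul_lt_mul_of_pos_left (logb_one_add_mul_lt hk hp hpq) hW)

lemma strictMonoOn_batteryDrain (hW : 0 < W) (hk : 0 < k) (hD : 0 < D) {C : ℝ} (hC : 0 < C) :
    StrictMonoOn (batteryDrain W k D C) (Ioi 0) := by
  intro p (hp : 0 < p) q (hq : 0 < q) hpq
  have hLp := logb_one_add_mul_pos hk hp
  have hLq := logb_one_add_mul_pos hk hq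
  have hLpq := logb_one_add_mul_lt hk hp hpq
  have hconcave : p * logb 2 (1 + k * q) ≤ q * logb 2 (1 + k * p) := by
    have h := mul_log_one_add_le_mul_log_one_add (mul_pos hk hp).le
      (mul_le_mul_of_nonneg_left hpq.le hk.le)
    simp only [logb, mul_div_assoc']
    rw [div_le_div_iff_of_pos_right (log_pos one_lt_two)]
    nlinarith
  have key : (p - C) * logb 2 (1 + k * q) < (q - C) * logb 2 (1 + k * p) := by nlinarith
  simp only [batteryDrain, transmissionTime, mul_div_assoc']
  rw [div_lt_div_iff₀ (by positivity) (by positivity)]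
  nlinarith [mul_lt_mul_of_pos_left key (mul_pos hD hW)]

def feasibleTimes (W k D B C Pmax : ℝ) : Set ℝ :=
  {τ : ℝ | 0 < τ ∧ ∃ α : ℝ, 0 ≤ α ∧ D ≤ W * τ * logb 2 (1 + k * α / τ) ∧
    α ≤ τ * Pmax ∧ α ≤ B + C * τ}

lemma transmissionTime_mem_feasibleTimes (hW : 0 < W) (hk : 0 < k) (hD : 0 < D)
    {B C Pmax p : ℝ} (hp : 0 < p) (hpPmax : p ≤ Pmax) (hdrain : batteryDrain W k D C p ≤ B) :
    transmissionTime W k D p ∈ feasibleTimes W k D B C Pmax := by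
  have hTp := transmissionTime_pos hW hk hD hp
  refine ⟨hTp, p * transmissionTime W k D p, by positivity, ?_, ?_, ?_⟩
  · rw [mul_div_assoc, mul_div_cancel_right₀ _ hTp.ne']
    exact (transmissionTime_le_iff hW hk hp).1 le_rfl
  · rw [mul_comm]
    exact mul_le_mul_of_nonneg_left hpPmax hTp.le
  · rw [batteryDrain] at hdrain
    linarith

lemma exists_power_of_mem_feasibleTimes (hW : 0 < W) (hk : 0 < k) (hD : 0 < D)
    {B C Pmax τ : ℝ} (hτ : τ ∈ feasibleTimes W k D B C Pmax) :
    ∃ Q, 0 < Q ∧ Q ≤ Pmax ∧ transmissionTime W k D Q ≤ τ ∧ (Q - C) * τ ≤ B := by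
  obtain ⟨hτ, α, hα, hrate, hpower, henergy⟩ := hτ
  have hαQ : α / τ * τ = α := div_mul_cancel₀ α hτ.ne'
  rw [mul_div_assoc] at hrate
  have hQ : 0 < α / τ := by
    refine (div_nonneg hα hτ.le).lt_of_ne fun hQ0 => ?_
    rw [← hQ0, mul_zero, add_zero, logb_one, mul_zero] at hrate
    linarith
  refine ⟨α / τ, hQ, (div_le_iff₀ hτ).2 (by linarith),
    (transmissionTime_le_iff hW hk hQ).2 hrate, by linarith⟩

end SingleUser

open SingleUser in
theorem single_user_optimal_time_general (W k D B C Pmax Pstar : ℝ)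
    (hW : 0 < W) (hk : 0 < k) (hD : 0 < D) (hB : 0 < B) (hC : 0 < C)
    (hPmax : 0 < Pmax) (hPstar : 0 < Pstar)
    (hsol : (Pstar - C) * (D / (W * Real.logb 2 (1 + k * Pstar))) = B) :
    IsLeast {τ : ℝ | 0 < τ ∧ ∃ α : ℝ, 0 ≤ α ∧
        D ≤ W * τ * Real.logb 2 (1 + k * α / τ) ∧
        α ≤ τ * Pmax ∧ α ≤ B + C * τ}
      (D / (W * Real.logb 2 (1 + k * min Pmax Pstar))) := by
  change batteryDrain W k D C Pstar = B at hsol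
  change IsLeast (feasibleTimes W k D B C Pmax) (transmissionTime W k D (min Pmax Pstar))
  have hdrain := strictMonoOn_batteryDrain hW hk hD hC
  have hp : 0 < min Pmax Pstar := lt_min hPmax hPstar
  have hCPstar : C < Pstar := by
    by_contra! h
    have : batteryDrain W k D C Pstar ≤ 0 :=
      mul_nonpos_of_nonpos_of_nonneg (by linarith) (transmissionTime_pos hW hk hD hPstar).le
    linarith
  refine ⟨transmissionTime_mem_feasibleTimes hW hk hD hp (min_le_left _ _)
    (hsol ▸ hdrain.monotoneOn hp hPstar (min_le_right _ _)), fun τ hτ => ?_⟩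
  obtain ⟨Q, hQ, hQPmax, hTQ, hQdrain⟩ := exists_power_of_mem_feasibleTimes hW hk hD hτ
  by_contra! hlt
  have hpQ : min Pmax Pstar < Q :=
    ((strictAntiOn_transmissionTime hW hk hD).lt_iff_gt hQ hp).1 (hTQ.trans_lt hlt)
  have hPstarQ : Pstar < Q := (min_lt_iff.1 hpQ).resolve_left hQPmax.not_gt
  have hB_lt := hsol ▸ hdrain hPstar hQ hPstarQ
  have : batteryDrain W k D C Q ≤ (Q - C) * τ := mul_le_mul_of_nonneg_left hTQ (by linarith)
  linarith

/-- Theorem 1, single-user case (optimal power control and time allocation): with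
`P*` the unique positive solution of `(P − C)·D/(W·logb 2 (1 + k·P)) = B`, the
transmission time `τ* = D/(W·logb 2 (1 + k·min(Pmax, P*)))` is the least element
of the set of feasible transmission times of the single-user power control and
time allocation problem. -/
theorem single_user_optimal_time (W k D B C Pmax Pstar : ℝ)
    (hW : 0 < W) (hk : 0 < k) (hD : 0 < D) (hB : 0 < B) (hC : 0 < C)
    (hPmax : 0 < Pmax) (hPstar : 0 < Pstar)
    (hsol : (Pstar - C) * (D / (W * Real.logb 2 (1 + k * Pstar))) = B)
    (huniq : ∀ P : ℝ, 0 < P →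
      (P - C) * (D / (W * Real.logb 2 (1 + k * P))) = B → P = Pstar) :
    IsLeast {τ : ℝ | 0 < τ ∧ ∃ α : ℝ, 0 ≤ α ∧
        D ≤ W * τ * Real.logb 2 (1 + k * α / τ) ∧
        α ≤ τ * Pmax ∧ α ≤ B + C * τ}
      (D / (W * Real.logb 2 (1 + k * min Pmax Pstar))) :=
  single_user_optimal_time_general W k D B C Pmax Pstar hW hk hD hB hC hPmax hPstar hsol
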